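/- arXiv:1708.08314 — 2 statements merged into one kernel-verified Lean document; each statement's English description precedes it below -/
import Mathlib

section
/- Let A be a metric space endowed with a finite Borel measure that is positive on every nonempty open subset. Let φ be a measure-preserving homeomorphism of A and let (ψ_i)_{i∈I} be a family of homeomorphisms ψ_i : Dom ψ_i → Im ψ_i between open subsets of A. Fix a nonempty open subset V ⊂ A. Let U_f be the union of all images of V under finite compositions of maps from {φ} ∪ {ψ_i}, and let U_g be the union of all images of V under finite compositions of maps from {φ, φ⁻¹} ∪ {ψ_i}. Then U_f ⊆ U_g and U_f is dense in U_g. -/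
/-!
Every map of the forward polysystem is an open map on an open domain, so the forward orbit
`U_f` is open and `φ`-invariant. Poincaré recurrence shows that `φ⁻¹` maps `U_f` into its
closure: for `x ∈ U_f` and a neighbourhood `O` of `φ⁻¹ x`, the open set `O ∩ φ⁻¹ U_f` is
nonempty, hence of positive measure, so some `y` in it returns to it at a time `k + 1 ≥ 1`,
and `φ^[k+1] y = φ^[k] (φ y) ∈ O ∩ U_f`. As all maps are continuous on open domains, the
closure of `U_f` is then invariant under the whole symmetrized polysystem, so it contains `U_g`.
-/
open Set MeasureTheory Topology

/-- Apply a finite chain of locally defined maps (each given by a domain and a map)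
to a set: `applyChain [p₁,…,pₙ] V = p₁ '' (… (pₙ '' (V ∩ domₙ)) … ∩ dom₁)`. -/
def applyChain {α : Type*} (l : List (Set α × (α → α))) (V : Set α) : Set α :=
  l.foldr (fun p S => p.2 '' (S ∩ p.1)) V

/-- The full orbit of `V` under a polysystem: the union of `V` with all images of `V`
under finite compositions (in any order) of the locally defined maps of the family. -/
def fullOrbit {α : Type*} (fam : Set (Set α × (α → α))) (V : Set α) : Set α :=
  ⋃ l ∈ {l : List (Set α × (α → α)) | ∀ p ∈ l, p ∈ fam}, applyChain l V

section Polysystem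

variable {α : Type*} {fam fam' : Set (Set α × (α → α))} {V S : Set α}

lemma mem_fullOrbit {x : α} :
    x ∈ fullOrbit fam V ↔
      ∃ l : List (Set α × (α → α)), (∀ p ∈ l, p ∈ fam) ∧ x ∈ applyChain l V := by
  simp [fullOrbit]

lemma subset_fullOrbit : V ⊆ fullOrbit fam V :=
  fun _ hx => mem_fullOrbit.2 ⟨[], by simp, hx⟩

lemma fullOrbit_mono (h : fam ⊆ fam') : fullOrbit fam V ⊆ fullOrbit fam' V := fun _ hx =>
  let ⟨l, hl, hxl⟩ := mem_fullOrbit.1 hx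
  mem_fullOrbit.2 ⟨l, fun p hp => h (hl p hp), hxl⟩

lemma mapsTo_fullOrbit {p : Set α × (α → α)} (hp : p ∈ fam) :
    MapsTo p.2 (fullOrbit fam V ∩ p.1) (fullOrbit fam V) := by
  rintro x ⟨hx, hxp⟩
  obtain ⟨l, hl, hxl⟩ := mem_fullOrbit.1 hx
  refine mem_fullOrbit.2 ⟨p :: l, ?_, x, ⟨hxl, hxp⟩, rfl⟩
  simpa only [List.mem_cons, forall_eq_or_imp] using ⟨hp, hl⟩

lemma fullOrbit_subset_of_mapsTo (hV : V ⊆ S) (hS : ∀ p ∈ fam, MapsTo p.2 (S ∩ p.1) S) :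
    fullOrbit fam V ⊆ S := by
  suffices ∀ l : List (Set α × (α → α)), (∀ p ∈ l, p ∈ fam) → applyChain l V ⊆ S by
    intro x hx
    obtain ⟨l, hl, hxl⟩ := mem_fullOrbit.1 hx
    exact this l hl hxl
  intro l
  induction l with
  | nil => exact fun _ => hV
  | cons p l ih =>
    intro hl
    simp only [List.mem_cons, forall_eq_or_imp] at hl
    exact image_subset_iff.2 <| (hS p hl.1).mono_left (inter_subset_inter_left _ (ih hl.2))

variable [TopologicalSpace α]

lemma isOpen_fullOrbit (hV : IsOpen V)
    (hfam : ∀ p ∈ fam, IsOpen p.1 ∧ ∀ U ⊆ p.1, IsOpen U → IsOpen (p.2 '' U)) :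
    IsOpen (fullOrbit fam V) := by
  suffices ∀ l : List (Set α × (α → α)), (∀ p ∈ l, p ∈ fam) → IsOpen (applyChain l V) from
    isOpen_biUnion this
  intro l
  induction l with
  | nil => exact fun _ => hV
  | cons p l ih =>
    intro hl
    simp only [List.mem_cons, forall_eq_or_imp] at hl
    obtain ⟨hdom, himage⟩ := hfam p hl.1
    exact himage _ inter_subset_right ((ih hl.2).inter hdom)

end Polysystem

lemma Set.MapsTo.closure_inter_of_isOpen {α : Type*} [TopologicalSpace α] {f : α → α}
    {s d : Set α} (h : MapsTo f (s ∩ d) s) (hd : IsOpen d) (hf : ContinuousOn f d) :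
    MapsTo f (closure s ∩ d) (closure s) := by
  rintro x ⟨hx, hxd⟩
  have hx' : x ∈ closure (s ∩ d) := by
    simpa only [inter_comm d] using hd.inter_closure ⟨hxd, hx⟩
  exact ((hf x hxd).mono inter_subset_right).mem_closure hx' h

lemma MeasureTheory.Conservative.preimage_subset_closure_of_mapsTo {α : Type*}
    [TopologicalSpace α] [MeasurableSpace α] [OpensMeasurableSpace α] {μ : Measure α}
    {f : α → α} (hf : Conservative f μ) (hfc : Continuous f)
    (hpos : ∀ U : Set α, IsOpen U → U.Nonempty → 0 < μ U)
    {U : Set α} (hU : IsOpen U) (hfU : MapsTo f U U) :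
    f ⁻¹' U ⊆ closure U := by
  intro x hx
  refine mem_closure_iff.2 fun O hO hxO => ?_
  have hW : IsOpen (O ∩ f ⁻¹' U) := hO.inter (hU.preimage hfc)
  obtain ⟨y, hyW, m, hm, hmy⟩ := hf.exists_mem_iterate_mem hW.measurableSet.nullMeasurableSet
    (hpos _ hW ⟨x, hxO, hx⟩).ne'
  obtain ⟨k, rfl⟩ := Nat.exists_eq_succ_of_ne_zero hm
  refine ⟨f^[k + 1] y, hmy.1, ?_⟩
  rw [Function.iterate_succ_apply]
  exact hfU.iterate k hyW.2

theorem symmetrization_of_polysystems_general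
    {A : Type*} [MetricSpace A] [MeasurableSpace A] [BorelSpace A]
    (μ : Measure A) [IsFiniteMeasure μ]
    (hpos : ∀ U : Set A, IsOpen U → U.Nonempty → 0 < μ U)
    (φ : A ≃ₜ A) (hφ : MeasurePreserving (φ : A → A) μ μ)
    {I : Type*} (dom : I → Set A) (ψ : I → A → A)
    (hdom : ∀ i, IsOpen (dom i))
    (hcont : ∀ i, ContinuousOn (ψ i) (dom i))
    (hopen : ∀ i, ∀ U ⊆ dom i, IsOpen U → IsOpen (ψ i '' U))
    (V : Set A) (hV : IsOpen V)
    (famf famg : Set (Set A × (A → A)))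
    (hfamf : famf = {(Set.univ, (φ : A → A))} ∪ Set.range (fun i => (dom i, ψ i)))
    (hfamg : famg = famf ∪ {(Set.univ, (φ.symm : A → A))}) :
    fullOrbit famf V ⊆ fullOrbit famg V ∧
      fullOrbit famg V ⊆ closure (fullOrbit famf V) := by
  have hfam : ∀ p ∈ famf, IsOpen p.1 ∧ ContinuousOn p.2 p.1 ∧
      ∀ U ⊆ p.1, IsOpen U → IsOpen (p.2 '' U) := by
    rw [hfamf]
    rintro p (rfl | ⟨i, rfl⟩)
    · exact ⟨isOpen_univ, φ.continuous.continuousOn, fun U _ hU => φ.isOpenMap U hU⟩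
    · exact ⟨hdom i, hcont i, hopen i⟩
  have hφf : (univ, (φ : A → A)) ∈ famf := by rw [hfamf]; exact Or.inl rfl
  set Uf := fullOrbit famf V
  have hUf : IsOpen Uf := isOpen_fullOrbit hV fun p hp => ⟨(hfam p hp).1, (hfam p hp).2.2⟩
  have hφUf : MapsTo φ Uf Uf := fun x hx => mapsTo_fullOrbit hφf ⟨hx, mem_univ x⟩
  have hφsymm : MapsTo φ.symm Uf (closure Uf) := fun x hx =>
    hφ.conservative.preimage_subset_closure_of_mapsTo φ.continuous hpos hUf hφUf
      (by rwa [mem_preimage, φ.apply_symm_apply])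
  refine ⟨fullOrbit_mono (hfamg ▸ subset_union_left), ?_⟩
  refine fullOrbit_subset_of_mapsTo (subset_fullOrbit.trans subset_closure) ?_
  rw [hfamg]
  rintro p (hp | rfl)
  · exact (mapsTo_fullOrbit hp).closure_inter_of_isOpen (hfam p hp).1 (hfam p hp).2.1
  · simpa only [closure_closure] using
      (hφsymm.closure φ.symm.continuous).mono_left inter_subset_left

/-- **Symmetrization of polysystems.**  Let `A` be a metric space with a finite Borel
measure positive on nonempty open sets, `φ` a measure-preserving homeomorphism, and
`(ψ_i)` a family of homeomorphisms between open subsets.  For a nonempty open `V`,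
the full orbit `U_f` of `V` under `{φ} ∪ {ψ_i}` is contained and dense in the full
orbit `U_g` of `V` under `{φ, φ⁻¹} ∪ {ψ_i}`. -/
theorem symmetrization_of_polysystems
    {A : Type*} [MetricSpace A] [MeasurableSpace A] [BorelSpace A]
    (μ : Measure A) [IsFiniteMeasure μ]
    (hpos : ∀ U : Set A, IsOpen U → U.Nonempty → 0 < μ U)
    (φ : A ≃ₜ A) (hφ : MeasurePreserving (φ : A → A) μ μ)
    {I : Type*} (dom : I → Set A) (ψ : I → A → A)
    (hdom : ∀ i, IsOpen (dom i))
    (him : ∀ i, IsOpen (ψ i '' dom i))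
    (hcont : ∀ i, ContinuousOn (ψ i) (dom i))
    (hinj : ∀ i, Set.InjOn (ψ i) (dom i))
    (hopen : ∀ i, ∀ U ⊆ dom i, IsOpen U → IsOpen (ψ i '' U))
    (V : Set A) (hV : IsOpen V) (hVne : V.Nonempty)
    (famf famg : Set (Set A × (A → A)))
    (hfamf : famf = {(Set.univ, (φ : A → A))} ∪ Set.range (fun i => (dom i, ψ i)))
    (hfamg : famg = famf ∪ {(Set.univ, (φ.symm : A → A))}) :
    fullOrbit famf V ⊆ fullOrbit famg V ∧
      fullOrbit famg V ⊆ closure (fullOrbit famf V) :=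
  symmetrization_of_polysystems_general μ hpos φ hφ dom ψ hdom hcont hopen V hV famf famg hfamf
    hfamg
end

section
/- Let Γ ⊂ 𝕋 × [0,1] be the graph of a ν-Lipschitz function ℓ : 𝕋 → [0,1], and let B = B_θ × B_r be a 'ν-ball' centered at a point of Γ, i.e. a product of intervals with length(B_r) > ν·length(B_θ). Then for every point z = (θ, r) in B lying strictly above Γ (i.e. r > ℓ(θ)), there exists a point z₀ = (θ₀, ℓ(θ₀)) ∈ Γ with θ₀ ∈ B_θ, θ₀ < θ, such that the straight segment from z₀ to z is contained in B, lies (except for its initial point) strictly above Γ, and has slope (r − ℓ(θ₀))/(θ − θ₀) > ν. -/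
open Set

/-- **Negatively-reachable points in a ν-ball (Lemma B.4 / lem:negtilt core).**
Work in a lift of the annulus 𝕋 × [0,1].  Let ℓ be a ν-Lipschitz function with values
in [0,1] and let B = B_θ × B_r be a ν-ball centered at the point (θc, ℓ θc) of the graph
Γ of ℓ, i.e. B_θ = Ioo (θc−w) (θc+w), B_r = Ioo (ℓ θc − h) (ℓ θc + h) with h > ν·w.
Then for every z = (θ,r) ∈ B strictly above Γ there is θ₀ ∈ B_θ with θ₀ < θ such that
the straight segment from (θ₀, ℓ θ₀) to (θ, r) has slope > ν, is contained in B, and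
lies strictly above Γ except at its initial point. -/
theorem segment_above_graph_in_nu_ball
    (ν : ℝ) (hν : 0 ≤ ν) (ℓ : ℝ → ℝ)
    (hmem : ∀ x, ℓ x ∈ Icc (0:ℝ) 1)
    (hlip : ∀ x y, |ℓ x - ℓ y| ≤ ν * |x - y|)
    (θc w h : ℝ) (hw : 0 < w) (hh : ν * w < h)
    (θ r : ℝ) (hθ : θ ∈ Ioo (θc - w) (θc + w)) (hr : r ∈ Ioo (ℓ θc - h) (ℓ θc + h))
    (habove : ℓ θ < r) :
    ∃ θ₀ ∈ Ioo (θc - w) (θc + w), θ₀ < θ ∧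
      ν * (θ - θ₀) < r - ℓ θ₀ ∧
      (∀ t ∈ Icc (0:ℝ) 1,
        (θ₀ + t * (θ - θ₀)) ∈ Ioo (θc - w) (θc + w) ∧
        (ℓ θ₀ + t * (r - ℓ θ₀)) ∈ Ioo (ℓ θc - h) (ℓ θc + h)) ∧
      (∀ t ∈ Ioc (0:ℝ) 1, ℓ (θ₀ + t * (θ - θ₀)) < ℓ θ₀ + t * (r - ℓ θ₀)) := by
  obtain ⟨hθ1, hθ2⟩ := hθ
  obtain ⟨hr1, hr2⟩ := hr
  have hδ : 0 < r - ℓ θ := by linarith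
  set ε := min ((r - ℓ θ) / (2 * (ν + 1))) ((θ - (θc - w)) / 2) with hεdef
  have hε0 : 0 < ε := lt_min (by positivity) (by linarith)
  have hε1 : ε ≤ (r - ℓ θ) / (2 * (ν + 1)) := min_le_left _ _
  have hε2 : ε ≤ (θ - (θc - w)) / 2 := min_le_right _ _
  have hε1' : 2 * (ν + 1) * ε ≤ r - ℓ θ := by
    have := (le_div_iff₀ (by positivity : (0:ℝ) < 2 * (ν + 1))).mp hε1
    linarith
  set θ₀ := θ - ε with hθ₀
  have hmemθ₀ : θ₀ ∈ Ioo (θc - w) (θc + w) := ⟨by simp [hθ₀]; linarith, by simp [hθ₀]; linarith⟩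
  have hL : |ℓ θ₀ - ℓ θ| ≤ ν * ε := by
    have := hlip θ₀ θ
    have : |θ₀ - θ| = ε := by rw [abs_eq (le_of_lt hε0)]; right; simp [hθ₀]
    calc |ℓ θ₀ - ℓ θ| ≤ ν * |θ₀ - θ| := hlip θ₀ θ
      _ = ν * ε := by rw [this]
  have hLle : ℓ θ₀ ≤ ℓ θ + ν * ε := by
    have := abs_le.mp hL
    linarith [this.2]
  have hLge : ℓ θ - ν * ε ≤ ℓ θ₀ := by
    have := abs_le.mp hL
    linarith [this.1]
  have hslope : ν * (θ - θ₀) < r - ℓ θ₀ := by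
    have : θ - θ₀ = ε := by simp [hθ₀]
    rw [this]
    nlinarith
  have hrθ₀ : ℓ θ₀ < r := by nlinarith
  have hLc : |ℓ θ₀ - ℓ θc| < h := by
    have h1 : |ℓ θ₀ - ℓ θc| ≤ ν * |θ₀ - θc| := hlip θ₀ θc
    have h2 : |θ₀ - θc| ≤ w := by
      rw [abs_le]; constructor <;> [linarith [hmemθ₀.1]; linarith [hmemθ₀.2]]
    calc |ℓ θ₀ - ℓ θc| ≤ ν * |θ₀ - θc| := h1
      _ ≤ ν * w := by nlinarith [abs_nonneg (θ₀ - θc)]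
      _ < h := hh
  obtain ⟨hLc1, hLc2⟩ := abs_lt.mp hLc
  refine ⟨θ₀, hmemθ₀, by simp [hθ₀]; linarith, hslope, ?_, ?_⟩
  · rintro t ⟨ht0, ht1⟩
    constructor
    · constructor
      · nlinarith [hmemθ₀.1]
      · nlinarith
    · constructor
      · nlinarith
      · nlinarith
  · rintro t ⟨ht0, ht1⟩
    have harg : |(θ₀ + t * (θ - θ₀)) - θ₀| = t * ε := by
      have hee : θ - θ₀ = ε := by simp [hθ₀]
      rw [hee]
      simp [abs_of_nonneg (by positivity : (0:ℝ) ≤ t * ε)]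
    have hLt : ℓ (θ₀ + t * (θ - θ₀)) ≤ ℓ θ₀ + ν * (t * ε) := by
      have := hlip (θ₀ + t * (θ - θ₀)) θ₀
      rw [harg] at this
      have := abs_le.mp this
      linarith [this.2]
    have hee : θ - θ₀ = ε := by simp [hθ₀]
    have hkey : ν * ε < r - ℓ θ₀ := by rw [← hee]; exact hslope
    have hmul : t * (ν * ε) < t * (r - ℓ θ₀) := by
      exact mul_lt_mul_of_pos_left hkey ht0
    have heq : ν * (t * ε) = t * (ν * ε) := by ring
    linarith
end
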